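/- For every x ∈ W2, G(x) = 2. -/

import Mathlib

/-!
The Grundy function is identified on its three lowest layers: `G x = 0` on `W0`, `G x = 1` on
`W1 = W0 + a` and `G x = 2` on `W2 = W0 - b`. By the mex recursion and strong induction, it is
enough that each layer consists exactly of the positions that have a move into every lower layer
but none into itself. These are local statements about `w`:
`w (m + k) - w m = k + a i + b j`, where `i` and `j` count the multiples of `a` and of `δ` in
`(m, m + k]`, and since `a < δ < 2a` only a few pairs `(i, j)` occur for the relevant `k`.
-/

/-- `w a b δ n = n + a⌊n/a⌋ + b⌊n/δ⌋`. -/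
def w (a b δ n : ℕ) : ℕ := n + a * (n / a) + b * (n / δ)

/-- `W0` is the image of `w`. -/
def W0 (a b δ : ℕ) : Set ℕ := Set.range (w a b δ)

/-- `W2 = {x : x + b ∈ W0}`. -/
def W2 (a b δ : ℕ) : Set ℕ := {x | x + b ∈ W0 a b δ}

/-- `mex T` is the least natural number not in `T`. -/
noncomputable def mex (T : Set ℕ) : ℕ := sInf {n | n ∉ T}

def HasMoveTo (S : Set ℕ) (x : ℕ) (P : Set ℕ) : Prop := ∃ s ∈ S, s ≤ x ∧ x - s ∈ P

theorem mex_eq_iff {T : Set ℕ} (hT : ∃ n, n ∉ T) {k : ℕ} :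
    mex T = k ↔ k ∉ T ∧ ∀ j < k, j ∈ T := by
  unfold mex
  constructor
  · rintro rfl
    exact ⟨Nat.sInf_mem hT, fun j hj => not_not.1 (Nat.notMem_of_lt_sInf hj)⟩
  · rintro ⟨hk, hlt⟩
    refine le_antisymm (Nat.sInf_le hk) (not_lt.1 fun h => ?_)
    exact (Nat.sInf_mem (s := {n | n ∉ T}) ⟨k, hk⟩) (hlt _ h)

theorem grundy_eq_iff_of_layers {S : Set ℕ} {G : ℕ → ℕ} (hS : ∀ s ∈ S, 0 < s)
    (hG : ∀ x, G x = mex {v | ∃ s ∈ S, s ≤ x ∧ v = G (x - s)}) {P : ℕ → Set ℕ} {K : ℕ}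
    (hP : ∀ k ≤ K, ∀ x, x ∈ P k ↔ (∀ j < k, HasMoveTo S x (P j)) ∧ ¬HasMoveTo S x (P k))
    (x : ℕ) : ∀ k ≤ K, G x = k ↔ x ∈ P k := by
  induction x using Nat.strong_induction_on with
  | _ x ih =>
  set T := {v | ∃ s ∈ S, s ≤ x ∧ v = G (x - s)}
  have hlt : ∀ s ∈ S, s ≤ x → x - s < x := fun s hs hsx => by have := hS s hs; omega
  have hfin : T ⊆ G '' Set.Iio x := fun v ⟨s, hs, hsx, hv⟩ => ⟨x - s, hlt s hs hsx, hv.symm⟩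
  have hT : ∃ n, n ∉ T := (((Set.finite_Iio x).image G).subset hfin).exists_notMem
  have hmem : ∀ j ≤ K, j ∈ T ↔ HasMoveTo S x (P j) := fun j hj =>
    ⟨fun ⟨s, hs, hsx, hv⟩ => ⟨s, hs, hsx, (ih _ (hlt s hs hsx) j hj).1 hv.symm⟩,
      fun ⟨s, hs, hsx, hm⟩ => ⟨s, hs, hsx, ((ih _ (hlt s hs hsx) j hj).2 hm).symm⟩⟩
  intro k hk
  rw [hG x, mex_eq_iff hT, hP k hk x, ← hmem k hk, and_comm]
  exact and_congr_left' (forall₂_congr fun j hj => hmem j (by omega))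

def W1 (a b δ : ℕ) : Set ℕ := {x | ∃ n, w a b δ n + a = x}

def layer (a b δ : ℕ) : ℕ → Set ℕ
  | 0 => W0 a b δ
  | 1 => W1 a b δ
  | _ => W2 a b δ

section Positions

variable {a b δ : ℕ}

theorem w_zero : w a b δ 0 = 0 := by simp [w]

theorem w_add (m k : ℕ) :
    w a b δ (m + k) = w a b δ m + k + a * ((m % a + k) / a) + b * ((m % δ + k) / δ) := by
  have hdiv : ∀ c, (m + k) / c = m / c + (m % c + k) / c := by
    intro c
    rcases c.eq_zero_or_pos with rfl | hc
    · simp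
    · conv_lhs => rw [← Nat.div_add_mod m c, add_assoc, add_comm, Nat.add_mul_div_left _ _ hc]
      ring
  simp only [w, hdiv]
  ring

theorem add_le_w_add (m k : ℕ) : w a b δ m + k ≤ w a b δ (m + k) := by
  rw [w_add]; omega

theorem w_mono : Monotone (w a b δ) := fun m n h => by
  obtain ⟨k, rfl⟩ := Nat.exists_eq_add_of_le h
  exact (Nat.le_add_right _ _).trans (add_le_w_add m k)

theorem exists_w_le_lt (x : ℕ) : ∃ n, w a b δ n ≤ x ∧ x < w a b δ (n + 1) := by
  classical
  have h : ∃ n, x < w a b δ (n + 1) := by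
    refine ⟨x, ?_⟩
    have := add_le_w_add (a := a) (b := b) (δ := δ) 0 (x + 1)
    rw [zero_add, w_zero] at this
    omega
  refine ⟨Nat.find h, ?_, Nat.find_spec h⟩
  rcases hn : Nat.find h with _ | n
  · simp [w_zero]
  · exact not_lt.1 (Nat.find_min h (by omega : n < Nat.find h))

theorem exists_w_add_eq (ha : 0 < a) (hδ : 0 < δ) (m k p q : ℕ) (hp : k < p * a)
    (hq : k < q * δ) :
    ∃ i ≤ p, ∃ j ≤ q, w a b δ (m + k) = w a b δ m + k + a * i + b * j ∧
      a * i + (m + k) % a = m % a + k ∧ δ * j + (m + k) % δ = m % δ + k ∧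
      m % a < a ∧ (m + k) % a < a ∧ m % δ < δ ∧ (m + k) % δ < δ := by
  have hma := Nat.mod_lt m ha
  have hmδ := Nat.mod_lt m hδ
  refine ⟨(m % a + k) / a, ?_, (m % δ + k) / δ, ?_, w_add m k, ?_, ?_, hma, Nat.mod_lt _ ha,
    hmδ, Nat.mod_lt _ hδ⟩
  · exact Nat.lt_succ_iff.1 ((Nat.div_lt_iff_lt_mul ha).2 (by rw [Nat.succ_mul]; omega))
  · exact Nat.lt_succ_iff.1 ((Nat.div_lt_iff_lt_mul hδ).2 (by rw [Nat.succ_mul]; omega))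
  · rw [← Nat.mod_add_mod]; exact Nat.div_add_mod _ _
  · rw [← Nat.mod_add_mod]; exact Nat.div_add_mod _ _

theorem exists_w_sub_eq (ha : 0 < a) (hδ : 0 < δ) (n K p q : ℕ) (hK : K ≤ n) (hp : K < p * a)
    (hq : K < q * δ) :
    ∃ i ≤ p, ∃ j ≤ q, w a b δ n = w a b δ (n - K) + K + a * i + b * j ∧
      a * i + n % a = (n - K) % a + K ∧ δ * j + n % δ = (n - K) % δ + K ∧
      (n - K) % a < a ∧ (n - K) % δ < δ := by
  obtain ⟨i, hi, j, hj, hw, hia, hjδ, hma, -, hmδ, -⟩ :=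
    exists_w_add_eq (b := b) ha hδ (n - K) K p q hp hq
  rw [Nat.sub_add_cancel hK] at hw hia hjδ
  exact ⟨i, hi, j, hj, hw, hia, hjδ, hma, hmδ⟩

theorem w_add_ne (ha : 0 < a) (had : a < δ) (hd2 : δ < 2 * a) (hb : b = a + δ) {s : ℕ}
    (hs : s ∈ ({a, b, a + b} : Set ℕ)) (m n : ℕ) : w a b δ m + s ≠ w a b δ n := by
  have hδ : 0 < δ := by omega
  simp only [Set.mem_insert_iff, Set.mem_singleton_iff] at hs
  intro h
  rcases le_or_gt m n with hmn | hnm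
  · obtain ⟨k, rfl⟩ := Nat.exists_eq_add_of_le hmn
    have hks : k ≤ s := by
      have := add_le_w_add (a := a) (b := b) (δ := δ) m k
      omega
    obtain ⟨i, hi, j, hj, hw⟩ := exists_w_add_eq (b := b) ha hδ m k 4 3 (by omega) (by omega)
    interval_cases i <;> interval_cases j <;> omega
  · have := w_mono (a := a) (b := b) (δ := δ) hnm.le
    omega

theorem hasMoveTo_W0_iff {S : Set ℕ} {x : ℕ} :
    HasMoveTo S x (W0 a b δ) ↔ ∃ s ∈ S, ∃ m, w a b δ m + s = x :=
  ⟨fun ⟨s, hs, hsx, m, hm⟩ => ⟨s, hs, m, by omega⟩,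
    fun ⟨s, hs, m, hm⟩ => ⟨s, hs, by omega, m, by omega⟩⟩

theorem hasMoveTo_W1_iff {S : Set ℕ} {x : ℕ} :
    HasMoveTo S x (W1 a b δ) ↔ ∃ s ∈ S, ∃ m, w a b δ m + a + s = x :=
  ⟨fun ⟨s, hs, hsx, m, hm⟩ => ⟨s, hs, m, by omega⟩,
    fun ⟨s, hs, m, hm⟩ => ⟨s, hs, by omega, m, by omega⟩⟩

theorem hasMoveTo_W0_of_not_mem (ha : 0 < a) (had : a < δ) (hd2 : δ < 2 * a) (hb : b = a + δ)
    {x : ℕ} (hx : x ∉ W0 a b δ) : HasMoveTo {a, b, a + b} x (W0 a b δ) := by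
  have hδ : 0 < δ := by omega
  rw [hasMoveTo_W0_iff]
  obtain ⟨n, hn, hxn⟩ := exists_w_le_lt (a := a) (b := b) (δ := δ) x
  obtain ⟨r, rfl⟩ : ∃ r, x = w a b δ n + r := ⟨x - w a b δ n, by omega⟩
  have hr : 0 < r := Nat.pos_of_ne_zero (by rintro rfl; exact hx ⟨n, rfl⟩)
  obtain ⟨e, he, f, hf, hgap⟩ := exists_w_add_eq (b := b) ha hδ n 1 1 1 (by omega) (by omega)
  have hna := Nat.mod_le n a
  have hnδ := Nat.mod_le n δ
  simp only [Set.mem_insert_iff, Set.mem_singleton_iff]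
  -- `x` lies `r` steps into the gap after `w n`; stepping back from `n` by `K = t - r` makes the
  -- move `t` plus the jumps crossed, and `t` is chosen according to the kind of gap
  interval_cases e <;> interval_cases f
  · omega
  · rcases (by omega : r + n % a < δ ∨ (δ ≤ r + n % a ∧ r ≤ a) ∨ (δ ≤ r + n % a ∧ a < r))
      with h | h | h
    · obtain ⟨i, hi, j, hj, hw⟩ :=
        exists_w_sub_eq (b := b) ha hδ n (δ - r) 2 1 (by omega) (by omega) (by omega)
      exact ⟨δ + a * i + b * j, by interval_cases i <;> interval_cases j <;> omega,
        n - (δ - r), by omega⟩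
    · obtain ⟨i, hi, j, hj, hw⟩ :=
        exists_w_sub_eq (b := b) ha hδ n (a - r) 1 1 (by omega) (by omega) (by omega)
      exact ⟨a + a * i + b * j, by interval_cases i <;> interval_cases j <;> omega,
        n - (a - r), by omega⟩
    · obtain ⟨i, hi, j, hj, hw⟩ :=
        exists_w_sub_eq (b := b) ha hδ n (a + δ - r) 2 1 (by omega) (by omega) (by omega)
      exact ⟨a + δ + a * i + b * j, by interval_cases i <;> interval_cases j <;> omega,
        n - (a + δ - r), by omega⟩
  · obtain ⟨i, hi, j, hj, hw⟩ :=
      exists_w_sub_eq (b := b) ha hδ n (a - r) 1 1 (by omega) (by omega) (by omega)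
    exact ⟨a + a * i + b * j, by interval_cases i <;> interval_cases j <;> omega,
      n - (a - r), by omega⟩
  · rcases (by omega : r ≤ a ∨ (a < r ∧ r ≤ a + δ) ∨ a + δ < r) with h | h | h
    · obtain ⟨i, hi, j, hj, hw⟩ :=
        exists_w_sub_eq (b := b) ha hδ n (a - r) 1 1 (by omega) (by omega) (by omega)
      exact ⟨a + a * i + b * j, by interval_cases i <;> interval_cases j <;> omega,
        n - (a - r), by omega⟩
    · obtain ⟨i, hi, j, hj, hw⟩ :=
        exists_w_sub_eq (b := b) ha hδ n (a + δ - r) 2 1 (by omega) (by omega) (by omega)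
      exact ⟨a + δ + a * i + b * j, by interval_cases i <;> interval_cases j <;> omega,
        n - (a + δ - r), by omega⟩
    · obtain ⟨i, hi, j, hj, hw⟩ :=
        exists_w_sub_eq (b := b) ha hδ n (2 * a + δ - r) 1 1 (by omega) (by omega) (by omega)
      exact ⟨2 * a + δ + a * i + b * j, by interval_cases i <;> interval_cases j <;> omega,
        n - (2 * a + δ - r), by omega⟩

theorem hasMoveTo_W1_of_mem_W2 (ha : 0 < a) (had : a < δ) (hd2 : δ < 2 * a) (hb : b = a + δ)
    {x : ℕ} (hx : x ∈ W2 a b δ) : HasMoveTo {a, b, a + b} x (W1 a b δ) := by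
  have hδ : 0 < δ := by omega
  obtain ⟨M, hM⟩ := hx
  have hMa := Nat.mod_lt M ha
  have hMδ := Nat.mod_lt M hδ
  have hδM : δ ≤ M := by
    by_contra h
    obtain ⟨i, hi, j, hj, hw⟩ := exists_w_add_eq (b := b) ha hδ 0 M 2 1 (by omega) (by omega)
    rw [zero_add, w_zero, Nat.zero_mod, Nat.zero_mod] at hw
    interval_cases i <;> interval_cases j <;> omega
  have hMδ' : M % δ + δ ≤ M := by
    have := Nat.mod_le (M - δ) δ
    rw [Nat.mod_eq_sub_mod hδM]
    omega
  rw [hasMoveTo_W1_iff]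
  simp only [Set.mem_insert_iff, Set.mem_singleton_iff]
  rcases (by omega : M % δ < a ∨ (a ≤ M % δ ∧ M % a + a < δ) ∨ (a ≤ M % δ ∧ δ ≤ M % a + a))
    with h | h | h
  · obtain ⟨i, hi, j, hj, hw⟩ :=
      exists_w_sub_eq (b := b) ha hδ M a 2 1 (by omega) (by omega) (by omega)
    exact ⟨a, by omega, M - a, by interval_cases i <;> interval_cases j <;> omega⟩
  · obtain ⟨i, hi, j, hj, hw⟩ :=
      exists_w_sub_eq (b := b) ha hδ M δ 2 2 hδM (by omega) (by omega)
    exact ⟨b, by omega, M - δ, by interval_cases i <;> interval_cases j <;> omega⟩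
  · obtain ⟨i, hi, j, hj, hw⟩ :=
      exists_w_sub_eq (b := b) ha hδ M (a + δ) 3 2 (by omega) (by omega) (by omega)
    exact ⟨a + b, by omega, M - (a + δ), by interval_cases i <;> interval_cases j <;> omega⟩

theorem hasMoveTo_W2_of_hasMoveTo_W1 (ha : 0 < a) (had : a < δ) (hd2 : δ < 2 * a)
    (hb : b = a + δ) {x : ℕ} (h : HasMoveTo {a, b, a + b} x (W1 a b δ)) (hx0 : x ∉ W0 a b δ)
    (hx2 : x ∉ W2 a b δ) : HasMoveTo {a, b, a + b} x (W2 a b δ) := by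
  have hδ : 0 < δ := by omega
  obtain ⟨s, hs, m, rfl⟩ := hasMoveTo_W1_iff.1 h
  simp only [Set.mem_insert_iff, Set.mem_singleton_iff] at hs
  have hx0' : ∀ n, w a b δ n ≠ w a b δ m + a + s := fun n hn => hx0 ⟨n, hn⟩
  have hx2' : ∀ n, w a b δ n ≠ w a b δ m + a + s + b := fun n hn => hx2 ⟨n, hn⟩
  -- the move is `a`, landing on `w m + s`, which is in `W2` because `w (m + δ) = x + δ`
  refine ⟨a, by simp, by omega, m + δ, ?_⟩
  obtain ⟨i1, hi1, j1, hj1, h1⟩ := exists_w_add_eq (b := b) ha hδ m a 2 1 (by omega) (by omega)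
  obtain ⟨i2, hi2, j2, hj2, h2⟩ := exists_w_add_eq (b := b) ha hδ m δ 2 2 (by omega) (by omega)
  obtain ⟨i3, hi3, j3, hj3, h3⟩ :=
    exists_w_add_eq (b := b) ha hδ (m + δ) a 2 1 (by omega) (by omega)
  obtain rfl : i1 = 1 := by interval_cases i1 <;> omega
  obtain rfl : j2 = 1 := by interval_cases j2 <;> omega
  obtain rfl : i3 = 1 := by interval_cases i3 <;> omega
  obtain rfl : j1 = j3 := by interval_cases j1 <;> interval_cases j3 <;> omega
  have := hx0' (m + a)
  have := hx2' (m + a)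
  have := hx2' (m + δ)
  have := hx2' (m + δ + a)
  interval_cases j1 <;> interval_cases i2 <;> omega

theorem mem_W0_iff (ha : 0 < a) (had : a < δ) (hd2 : δ < 2 * a) (hb : b = a + δ) (x : ℕ) :
    x ∈ W0 a b δ ↔ ¬HasMoveTo {a, b, a + b} x (W0 a b δ) := by
  refine ⟨?_, fun h => by_contra fun hx => h (hasMoveTo_W0_of_not_mem ha had hd2 hb hx)⟩
  rintro ⟨n, rfl⟩ ⟨s, hs, hsn, m, hm⟩
  exact w_add_ne ha had hd2 hb hs m n (by omega)

theorem mem_W1_iff (ha : 0 < a) (had : a < δ) (hd2 : δ < 2 * a) (hb : b = a + δ) (x : ℕ) :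
    x ∈ W1 a b δ ↔
      HasMoveTo {a, b, a + b} x (W0 a b δ) ∧ ¬HasMoveTo {a, b, a + b} x (W1 a b δ) := by
  constructor
  · rintro ⟨n, rfl⟩
    refine ⟨hasMoveTo_W0_iff.2 ⟨a, by simp, n, rfl⟩, fun h => ?_⟩
    obtain ⟨s, hs, m, hm⟩ := hasMoveTo_W1_iff.1 h
    exact w_add_ne ha had hd2 hb hs m n (by omega)
  · rintro ⟨⟨s, hs, hsx, -⟩, hno⟩
    have hax : a ≤ x := by
      simp only [Set.mem_insert_iff, Set.mem_singleton_iff] at hs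
      omega
    by_contra hx
    have hxa : x - a ∉ W0 a b δ := fun ⟨n, hn⟩ => hx ⟨n, by omega⟩
    obtain ⟨t, ht, m, hm⟩ := hasMoveTo_W0_iff.1 (hasMoveTo_W0_of_not_mem ha had hd2 hb hxa)
    exact hno (hasMoveTo_W1_iff.2 ⟨t, ht, m, by omega⟩)

theorem mem_W2_iff (ha : 0 < a) (had : a < δ) (hd2 : δ < 2 * a) (hb : b = a + δ) (x : ℕ) :
    x ∈ W2 a b δ ↔ (HasMoveTo {a, b, a + b} x (W0 a b δ) ∧
      HasMoveTo {a, b, a + b} x (W1 a b δ)) ∧ ¬HasMoveTo {a, b, a + b} x (W2 a b δ) := by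
  constructor
  · rintro ⟨M, hM⟩
    have hx0 : x ∉ W0 a b δ := fun ⟨n, hn⟩ =>
      w_add_ne ha had hd2 hb (s := b) (by simp) n M (by omega)
    refine ⟨⟨hasMoveTo_W0_of_not_mem ha had hd2 hb hx0,
      hasMoveTo_W1_of_mem_W2 ha had hd2 hb ⟨M, hM⟩⟩, fun ⟨s, hs, hsx, m, hm⟩ => ?_⟩
    exact w_add_ne ha had hd2 hb hs m M (by omega)
  · rintro ⟨⟨h0, h1⟩, h2⟩
    by_contra hx
    exact h2 (hasMoveTo_W2_of_hasMoveTo_W1 ha had hd2 hb h1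
      (fun hx0 => (mem_W0_iff ha had hd2 hb x).1 hx0 h0) hx)

end Positions

theorem stmt_17_general (a δ : ℕ) (ha : 0 < a) (hlt : a < δ) (hlt2 : δ < 2 * a)
    (b : ℕ) (hb : b = a + δ)
    (G : ℕ → ℕ)
    (hG : ∀ x, G x = mex {v | ∃ s ∈ ({a, b, a + b} : Set ℕ), s ≤ x ∧ v = G (x - s)}) :
    ∀ x ∈ W2 a b δ, G x = 2 := by
  have hS : ∀ s ∈ ({a, b, a + b} : Set ℕ), 0 < s := by
    simp only [Set.mem_insert_iff, Set.mem_singleton_iff]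
    omega
  have hlayer : ∀ k ≤ 2, ∀ x, x ∈ layer a b δ k ↔
      (∀ j < k, HasMoveTo {a, b, a + b} x (layer a b δ j)) ∧
        ¬HasMoveTo {a, b, a + b} x (layer a b δ k) := by
    intro k hk x
    interval_cases k
    · simpa [layer] using mem_W0_iff ha hlt hlt2 hb x
    · simpa [layer] using mem_W1_iff ha hlt hlt2 hb x
    · simp only [Nat.forall_lt_succ_right, Nat.not_lt_zero, IsEmpty.forall_iff, forall_const,
        true_and]
      exact mem_W2_iff ha hlt hlt2 hb x
  exact fun x hx => (grundy_eq_iff_of_layers hS hG hlayer x 2 le_rfl).2 hx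

/-- If `G` is the Grundy function of the subtraction game with moves
`S = {a, b, a+b}`, then `G x = 2` for every `x ∈ W2`. -/
theorem stmt_17 (a δ : ℕ) (ha : 0 < a) (hlt : a < δ) (hlt2 : δ < 2 * a)
    (hgcd : Nat.gcd a δ = 1) (b : ℕ) (hb : b = a + δ)
    (G : ℕ → ℕ)
    (hG : ∀ x, G x = mex {v | ∃ s ∈ ({a, b, a + b} : Set ℕ), s ≤ x ∧ v = G (x - s)}) :
    ∀ x ∈ W2 a b δ, G x = 2 :=
  stmt_17_general a δ ha hlt hlt2 b hb G hG
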